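/- For the variable-arity aggregator AggVar, running two complete sessions back to back is equivalent to running them independently: for n, m > 0, running AggVar from the waiting state on the sequence (n, x₁, …, x_n, m, y₁, …, y_m) yields exactly the outputs some (F [x₁,…,x_n]) at position n+1 and some (F [y₁,…,y_m]) at position n+m+2, with none everywhere else, and ends in the waiting state. -/

import Mathlib

/-!
Run from the waiting state, a session `k, x₁, …, x_k` with `k > 0` emits `none` on every input
but the last, emits `F [x₁, …, x_k]` on the last one, and leaves the machine waiting again.
Since the first session ends in the state from which the second one starts, the run on the
concatenation splits as the concatenation of the two runs (`List.scanl_append`).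
-/

/-- The variable-arity aggregator: state is waiting (`Sum.inl ()`) or
collecting a target count with an accumulator (`Sum.inr (n, acc)`). -/
def AggVar {X Y : Type*} (F : List X → Y) (inp : ℕ ⊕ X)
    (s : Unit ⊕ (ℕ × List X)) : Option Y × (Unit ⊕ (ℕ × List X)) :=
  match s, inp with
  | Sum.inl _, Sum.inl n => if 0 < n then (none, Sum.inr (n, [])) else (none, Sum.inl ())
  | Sum.inl _, Sum.inr _ => (none, Sum.inl ())
  | Sum.inr (n, acc), Sum.inr x =>
      if acc.length + 1 < n then (none, Sum.inr (n, acc ++ [x]))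
      else (some (F (acc ++ [x])), Sum.inl ())
  | Sum.inr s', Sum.inl _ => (none, Sum.inr s')

namespace AggVar

variable {X Y : Type*} (F : List X → Y)

abbrev step (p : Option Y × (Unit ⊕ (ℕ × List X))) (i : ℕ ⊕ X) :
    Option Y × (Unit ⊕ (ℕ × List X)) :=
  AggVar F i p.2

theorem step_start (o : Option Y) {k : ℕ} (hk : 0 < k) :
    step F (o, Sum.inl ()) (Sum.inl k) = (none, Sum.inr (k, [])) := by
  simp [step, AggVar, hk]

theorem step_collect_of_lt (o : Option Y) (x : X) {acc : List X} {k : ℕ}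
    (hk : acc.length + 1 < k) :
    step F (o, Sum.inr (k, acc)) (Sum.inr x) = (none, Sum.inr (k, acc ++ [x])) := by
  simp [step, AggVar, hk]

theorem step_collect_of_le (o : Option Y) (x : X) {acc : List X} {k : ℕ}
    (hk : k ≤ acc.length + 1) :
    step F (o, Sum.inr (k, acc)) (Sum.inr x) = (some (F (acc ++ [x])), Sum.inl ()) := by
  simp [step, AggVar, Nat.not_lt.mpr hk]

theorem foldl_step_collect (o : Option Y) (x : X) (xs acc : List X) {k : ℕ}
    (hk : acc.length + xs.length + 1 = k) :
    ((x :: xs).map Sum.inr).foldl (step F) (o, Sum.inr (k, acc))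
      = (some (F (acc ++ x :: xs)), Sum.inl ()) := by
  induction xs generalizing o x acc with
  | nil =>
    simp only [List.map_cons, List.map_nil, List.foldl_cons, List.foldl_nil]
    exact step_collect_of_le F o x (by simp at hk; omega)
  | cons y ys ih =>
    have hk' : (acc ++ [x]).length + ys.length + 1 = k := by simp at hk ⊢; omega
    rw [List.map_cons, List.foldl_cons, step_collect_of_lt F o x (by simp at hk; omega),
      ih none y (acc ++ [x]) hk', List.append_assoc, List.singleton_append]

theorem map_fst_scanl_step_collect (o : Option Y) (x : X) (xs acc : List X) {k : ℕ}
    (hk : acc.length + xs.length + 1 = k) :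
    (((x :: xs).map Sum.inr).scanl (step F) (o, Sum.inr (k, acc))).map Prod.fst
      = o :: List.replicate xs.length none ++ [some (F (acc ++ x :: xs))] := by
  induction xs generalizing o x acc with
  | nil =>
    simp only [List.map_cons, List.map_nil, List.scanl_cons, List.scanl_nil,
      step_collect_of_le F o x (show k ≤ acc.length + 1 by simp at hk; omega)]
    rfl
  | cons y ys ih =>
    have hk' : (acc ++ [x]).length + ys.length + 1 = k := by simp at hk ⊢; omega
    rw [List.map_cons, List.scanl_cons, step_collect_of_lt F o x (by simp at hk; omega),
      List.map_cons, ih none y (acc ++ [x]) hk', List.append_assoc, List.singleton_append]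
    rfl

theorem foldl_step_session (o : Option Y) {xs : List X} (hxs : xs ≠ []) :
    (Sum.inl xs.length :: xs.map Sum.inr).foldl (step F) (o, Sum.inl ())
      = (some (F xs), Sum.inl ()) := by
  obtain ⟨x, xs, rfl⟩ := List.exists_cons_of_ne_nil hxs
  rw [List.foldl_cons, step_start F o (List.length_pos_of_ne_nil hxs)]
  exact foldl_step_collect F none x xs [] (by simp)

theorem map_fst_scanl_step_session (o : Option Y) {xs : List X} (hxs : xs ≠ []) :
    ((Sum.inl xs.length :: xs.map Sum.inr).scanl (step F) (o, Sum.inl ())).map Prod.fst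
      = o :: List.replicate xs.length none ++ [some (F xs)] := by
  obtain ⟨x, xs, rfl⟩ := List.exists_cons_of_ne_nil hxs
  rw [List.scanl_cons, step_start F o (List.length_pos_of_ne_nil hxs), List.map_cons,
    map_fst_scanl_step_collect F none x xs [] (by simp)]
  rfl

end AggVar

theorem stmt_4 {X Y : Type*} (F : List X → Y) (n m : ℕ) (hn : 0 < n) (hm : 0 < m)
    (xs ys : List X) (hxs : xs.length = n) (hys : ys.length = m) :
    (List.scanl
        (fun (p : Option Y × (Unit ⊕ (ℕ × List X))) (i : ℕ ⊕ X) => AggVar F i p.2)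
        (none, Sum.inl ())
        (Sum.inl n :: xs.map Sum.inr ++ Sum.inl m :: ys.map Sum.inr)).map Prod.fst
      = List.replicate (n + 1) none ++ [some (F xs)]
          ++ List.replicate m none ++ [some (F ys)] ∧
    (List.foldl
        (fun (p : Option Y × (Unit ⊕ (ℕ × List X))) (i : ℕ ⊕ X) => AggVar F i p.2)
        (none, Sum.inl ())
        (Sum.inl n :: xs.map Sum.inr ++ Sum.inl m :: ys.map Sum.inr)).2
      = Sum.inl () := by
  subst hxs hys
  have hx : xs ≠ [] := List.ne_nil_of_length_pos hn
  have hy : ys ≠ [] := List.ne_nil_of_length_pos hm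
  constructor
  · rw [List.scanl_append, List.map_append, List.map_tail,
      AggVar.foldl_step_session F _ hx, AggVar.map_fst_scanl_step_session F _ hx,
      AggVar.map_fst_scanl_step_session F _ hy]
    simp [List.replicate_succ]
  · rw [List.foldl_append, AggVar.foldl_step_session F _ hx, AggVar.foldl_step_session F _ hy]
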